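/- arXiv:0906.4073 — 6 statements merged into one kernel-verified Lean document; each statement's English description precedes it below -/
import Mathlib

section
/- Let ν be a non-degenerate probability measure with support bounded above by B = max{0, sup supp(ν)}. Then the mean function m(θ) = (M(θ)-1)/(θ M(θ)), where M(θ) = ∫ 1/(1-θx) dν(x), is strictly increasing on (0, 1/B). -/
/-!
Write `f_θ x = 1 / (1 - θ x)` and `M θ = ∫ f_θ dν`. The resolvent identity
`b f_b - a f_a = (b - a) f_a f_b` gives `b M b - a M a = (b - a) ∫ f_a f_b`, and after clearing
denominators `m a < m b` becomes `M a * M b < ∫ f_a f_b`. This is the strict Chebyshev integral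
inequality for the two strictly increasing functions `f_a`, `f_b`: the integral of
`(f x - f y) (g x - g y)` over `ν ⊗ ν` equals `2 (∫ f g - ∫ f ∫ g)`, and it can only vanish if
`ν`-almost every pair lies on the diagonal, that is if `ν` is a Dirac mass.
-/

open MeasureTheory Set

namespace MeasureTheory

variable {α : Type*} [MeasurableSpace α]

lemma Measure.eq_dirac_of_ae_eq [MeasurableSingletonClass α] (μ : Measure α)
    [IsProbabilityMeasure μ] {x : α} (h : ∀ᵐ y ∂μ, y = x) : μ = Measure.dirac x := by
  have hx : μ {x} = 1 :=
    (prob_compl_eq_zero_iff (measurableSet_singleton x)).1 (ae_iff.1 h)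
  have hμ := (Measure.ae_mem_finset_iff (s := {x})).1 (by simpa using h)
  simpa [hx] using hμ

lemma integral_pos_of_ae_pos (μ : Measure α) [NeZero μ] {f : α → ℝ} (hf : ∀ᵐ x ∂μ, 0 < f x)
    (hfi : Integrable f μ) : 0 < ∫ x, f x ∂μ := by
  refine (integral_pos_iff_support_of_nonneg_ae (hf.mono fun _ hx => hx.le) hfi).2
    (pos_iff_ne_zero.2 fun h_zero => ?_)
  obtain ⟨x, hx_zero, hx_pos⟩ := ((measure_eq_zero_iff_ae_notMem.1 h_zero).and hf).exists
  exact hx_zero hx_pos.ne'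

section Chebyshev

variable (μ : Measure α) {f g : α → ℝ}

lemma integrable_prod_sub_mul_sub [IsFiniteMeasure μ] (hf : Integrable f μ)
    (hg : Integrable g μ) (hfg : Integrable (fun x => f x * g x) μ) :
    Integrable (fun p : α × α => (f p.1 - f p.2) * (g p.1 - g p.2)) (μ.prod μ) := by
  refine (((hfg.comp_fst μ).add (hfg.comp_snd μ)).sub
    ((hf.mul_prod hg).add (hg.mul_prod hf))).congr (ae_of_all _ fun p => ?_)
  simp only [Pi.add_apply, Pi.sub_apply]
  ring

lemma integral_prod_sub_mul_sub [IsProbabilityMeasure μ] (hf : Integrable f μ)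
    (hg : Integrable g μ) (hfg : Integrable (fun x => f x * g x) μ) :
    ∫ p, (f p.1 - f p.2) * (g p.1 - g p.2) ∂μ.prod μ =
      2 * (∫ x, f x * g x ∂μ - (∫ x, f x ∂μ) * ∫ x, g x ∂μ) := by
  have h_diag : Integrable (fun p : α × α => f p.1 * g p.1 + f p.2 * g p.2) (μ.prod μ) :=
    (hfg.comp_fst μ).add (hfg.comp_snd μ)
  have h_cross : Integrable (fun p : α × α => f p.1 * g p.2 + g p.1 * f p.2) (μ.prod μ) :=
    (hf.mul_prod hg).add (hg.mul_prod hf)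
  have h_expand : (fun p : α × α => (f p.1 - f p.2) * (g p.1 - g p.2)) = fun p =>
      (f p.1 * g p.1 + f p.2 * g p.2) - (f p.1 * g p.2 + g p.1 * f p.2) := by
    ext p; ring
  rw [h_expand, integral_sub h_diag h_cross, integral_add (hfg.comp_fst μ) (hfg.comp_snd μ),
    integral_add (hf.mul_prod hg) (hg.mul_prod hf), integral_fun_fst (fun x => f x * g x),
    integral_fun_snd (fun x => f x * g x), integral_prod_mul, integral_prod_mul]
  simp only [probReal_univ, one_smul]
  ring

lemma integral_mul_integral_lt_integral_mul [LinearOrder α] [MeasurableSingletonClass α]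
    [IsProbabilityMeasure μ] (hμ : ∀ x, μ ≠ Measure.dirac x) {s : Set α} (hs : ∀ᵐ x ∂μ, x ∈ s)
    (hfs : StrictMonoOn f s) (hgs : StrictMonoOn g s)
    (hf : Integrable f μ) (hg : Integrable g μ) (hfg : Integrable (fun x => f x * g x) μ) :
    (∫ x, f x ∂μ) * ∫ x, g x ∂μ < ∫ x, f x * g x ∂μ := by
  set h : α × α → ℝ := fun p => (f p.1 - f p.2) * (g p.1 - g p.2) with h_def
  have hs2 : ∀ᵐ p ∂μ.prod μ, p.1 ∈ s ∧ p.2 ∈ s :=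
    (Measure.quasiMeasurePreserving_fst.ae hs).and (Measure.quasiMeasurePreserving_snd.ae hs)
  have h_pos : ∀ p : α × α, p.1 ∈ s → p.2 ∈ s → p.1 ≠ p.2 → 0 < h p := by
    rintro ⟨x, y⟩ hx hy hxy
    rcases hxy.lt_or_gt with hlt | hgt
    · exact mul_pos_of_neg_of_neg (sub_neg.2 (hfs hx hy hlt)) (sub_neg.2 (hgs hx hy hlt))
    · exact mul_pos (sub_pos.2 (hfs hy hx hgt)) (sub_pos.2 (hgs hy hx hgt))
  have h_nonneg : 0 ≤ᵐ[μ.prod μ] h := hs2.mono fun p ⟨hp₁, hp₂⟩ => by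
    rcases eq_or_ne p.1 p.2 with heq | hne
    · simp [h_def, heq]
    · exact (h_pos p hp₁ hp₂ hne).le
  have h_int : Integrable h (μ.prod μ) := integrable_prod_sub_mul_sub μ hf hg hfg
  have h_ne : ∫ p, h p ∂μ.prod μ ≠ 0 := by
    intro h_zero
    have h_diag : ∀ᵐ p ∂μ.prod μ, p.1 = p.2 :=
      (((integral_eq_zero_iff_of_nonneg_ae h_nonneg h_int).1 h_zero).and hs2).mono
        fun p ⟨hp, hp₁, hp₂⟩ => by_contra fun hne => (h_pos p hp₁ hp₂ hne).ne' hp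
    obtain ⟨x, hx⟩ := (Measure.ae_ae_of_ae_prod h_diag).exists
    exact hμ x (Measure.eq_dirac_of_ae_eq μ (hx.mono fun y hy => hy.symm))
  have h_lt := (integral_nonneg_of_ae h_nonneg).lt_of_ne' h_ne
  rw [integral_prod_sub_mul_sub μ hf hg hfg] at h_lt
  linarith

end Chebyshev

end MeasureTheory

section Resolvent

variable {B θ : ℝ}

lemma one_sub_mul_pos_of_le (hθ : 0 < θ) (hθB : θ * B < 1) {x : ℝ} (hx : x ≤ B) :
    0 < 1 - θ * x := by
  nlinarith

lemma strictMonoOn_one_div_one_sub_mul (hθ : 0 < θ) (hθB : θ * B < 1) :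
    StrictMonoOn (fun x => 1 / (1 - θ * x)) (Iic B) := fun _ _ _ hy hxy =>
  one_div_lt_one_div_of_lt (one_sub_mul_pos_of_le hθ hθB hy) (by nlinarith)

lemma abs_one_div_one_sub_mul_le (hθ : 0 < θ) (hθB : θ * B < 1) {x : ℝ} (hx : x ≤ B) :
    |1 / (1 - θ * x)| ≤ 1 / (1 - θ * B) := by
  rw [abs_of_pos (one_div_pos.2 (one_sub_mul_pos_of_le hθ hθB hx))]
  exact one_div_le_one_div_of_le (one_sub_mul_pos_of_le hθ hθB le_rfl) (by nlinarith)

lemma resolvent_identity {a b x : ℝ} (hax : 1 - a * x ≠ 0) (hbx : 1 - b * x ≠ 0) :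
    b * (1 / (1 - b * x)) - a * (1 / (1 - a * x)) =
      (b - a) * (1 / (1 - a * x) * (1 / (1 - b * x))) := by
  rw [mul_one_div, mul_one_div, div_sub_div _ _ hbx hax, one_div_mul_one_div, mul_one_div]
  congr 1 <;> ring

lemma measurable_one_div_one_sub_mul (θ : ℝ) : Measurable fun x : ℝ => 1 / (1 - θ * x) := by
  fun_prop

variable {ν : Measure ℝ}

lemma integrable_one_div_one_sub_mul [IsFiniteMeasure ν] (hsupp : ∀ᵐ x ∂ν, x ≤ B)
    (hθ : 0 < θ) (hθB : θ * B < 1) : Integrable (fun x => 1 / (1 - θ * x)) ν :=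
  .of_bound (measurable_one_div_one_sub_mul θ).aestronglyMeasurable _
    (hsupp.mono fun _ hx => abs_one_div_one_sub_mul_le hθ hθB hx)

lemma integral_one_div_one_sub_mul_pos [IsProbabilityMeasure ν] (hsupp : ∀ᵐ x ∂ν, x ≤ B)
    (hθ : 0 < θ) (hθB : θ * B < 1) : 0 < ∫ x, 1 / (1 - θ * x) ∂ν := by
  have h_pos : ∀ᵐ x ∂ν, 0 < 1 / (1 - θ * x) :=
    hsupp.mono fun _ hx => one_div_pos.2 (one_sub_mul_pos_of_le hθ hθB hx)
  exact integral_pos_of_ae_pos ν h_pos (integrable_one_div_one_sub_mul hsupp hθ hθB)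

lemma integrable_one_div_one_sub_mul_mul [IsFiniteMeasure ν] (hsupp : ∀ᵐ x ∂ν, x ≤ B)
    {a b : ℝ} (ha : 0 < a) (haB : a * B < 1) (hb : 0 < b) (hbB : b * B < 1) :
    Integrable (fun x => 1 / (1 - a * x) * (1 / (1 - b * x))) ν :=
  (integrable_one_div_one_sub_mul hsupp hb hbB).bdd_mul
    (measurable_one_div_one_sub_mul a).aestronglyMeasurable
    (hsupp.mono fun _ hx => abs_one_div_one_sub_mul_le ha haB hx)

lemma mul_integral_one_div_one_sub_mul_sub [IsFiniteMeasure ν] (hsupp : ∀ᵐ x ∂ν, x ≤ B)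
    {a b : ℝ} (ha : 0 < a) (haB : a * B < 1) (hb : 0 < b) (hbB : b * B < 1) :
    b * (∫ x, 1 / (1 - b * x) ∂ν) - a * ∫ x, 1 / (1 - a * x) ∂ν =
      (b - a) * ∫ x, 1 / (1 - a * x) * (1 / (1 - b * x)) ∂ν := by
  rw [← integral_const_mul, ← integral_const_mul, ← integral_const_mul,
    ← integral_sub ((integrable_one_div_one_sub_mul hsupp hb hbB).const_mul b)
      ((integrable_one_div_one_sub_mul hsupp ha haB).const_mul a)]
  refine integral_congr_ae (hsupp.mono fun x hx => ?_)
  exact resolvent_identity (one_sub_mul_pos_of_le ha haB hx).ne'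
    (one_sub_mul_pos_of_le hb hbB hx).ne'

end Resolvent

theorem stmt4_general (ν : Measure ℝ) [IsProbabilityMeasure ν]
    (hnd : ∀ c : ℝ, ν ≠ Measure.dirac c) (B : ℝ)
    (hsupp : ∀ᵐ x ∂ν, x ≤ B) :
    StrictMonoOn
      (fun θ => ((∫ x, 1 / (1 - θ * x) ∂ν) - 1) / (θ * ∫ x, 1 / (1 - θ * x) ∂ν))
      {θ : ℝ | 0 < θ ∧ θ * B < 1} := by
  rintro a ⟨ha, haB⟩ b ⟨hb, hbB⟩ hab
  have hMa := integral_one_div_one_sub_mul_pos hsupp ha haB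
  have hMb := integral_one_div_one_sub_mul_pos hsupp hb hbB
  have h_cheb := integral_mul_integral_lt_integral_mul ν hnd hsupp
    (strictMonoOn_one_div_one_sub_mul ha haB) (strictMonoOn_one_div_one_sub_mul hb hbB)
    (integrable_one_div_one_sub_mul hsupp ha haB) (integrable_one_div_one_sub_mul hsupp hb hbB)
    (integrable_one_div_one_sub_mul_mul hsupp ha haB hb hbB)
  have h_res := mul_integral_one_div_one_sub_mul_sub hsupp ha haB hb hbB
  rw [div_lt_div_iff₀ (mul_pos ha hMa) (mul_pos hb hMb)]
  nlinarith [mul_lt_mul_of_pos_left h_cheb (sub_pos.2 hab)]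

/-- The mean function m(θ) = (M(θ)-1)/(θ M(θ)) is strictly
increasing on the set {θ : 0 < θ, θ B < 1} (which is (0,1/B), with 1/0 = ∞). -/
theorem stmt4 (ν : Measure ℝ) [IsProbabilityMeasure ν]
    (hnd : ∀ c : ℝ, ν ≠ Measure.dirac c) (B : ℝ)
    (hB : 0 ≤ B) (hsupp : ∀ᵐ x ∂ν, x ≤ B) :
    StrictMonoOn
      (fun θ => ((∫ x, 1 / (1 - θ * x) ∂ν) - 1) / (θ * ∫ x, 1 / (1 - θ * x) ∂ν))
      {θ : ℝ | 0 < θ ∧ θ * B < 1} :=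
  stmt4_general ν hnd B hsupp
end

section
/- Let ν be a non-degenerate probability measure with support bounded above by b ∈ ℝ, and let G(z) = ∫ 1/(z-x) dν(x) be its Cauchy transform. Then for all real b < z₁ < z₂: G(z₁) - G(z₂) > (z₂ - z₁) G(z₁) G(z₂). -/
/-! Both kernels `x ↦ 1 / (z₁ - x)` and `x ↦ 1 / (z₂ - x)` are strictly increasing on the
support of `ν`. Symmetrizing, `∬ (f x - f y) (g x - g y) dν dν = 2 (∫ f g - ∫ f ∫ g)`, and the
integrand is positive off the diagonal, which has positive `ν ⊗ ν`-mass unless `ν` is a point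
mass; hence `G(z₁) G(z₂) < ∫ f g` (strict Chebyshev inequality). The resolvent identity
`1 / (z₁ - x) - 1 / (z₂ - x) = (z₂ - z₁) / ((z₁ - x) (z₂ - x))` identifies `(z₂ - z₁) ∫ f g` with
`G(z₁) - G(z₂)`. -/

open MeasureTheory Real Set Filter

theorem MeasureTheory.Measure.exists_eq_dirac_of_ae_prod_fst_eq_snd {α : Type*} [MeasurableSpace α]
    (ν : Measure α) [IsProbabilityMeasure ν] (h : ∀ᵐ p ∂ν.prod ν, p.1 = p.2) :
    ∃ c, ν = Measure.dirac c := by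
  obtain ⟨c, hc⟩ := (Measure.ae_ae_of_ae_prod h).exists
  refine ⟨c, ?_⟩
  have hid : (fun y : α => y) =ᵐ[ν] fun _ => c := hc.mono fun y hy => hy.symm
  calc ν = ν.map (fun y => y) := Measure.map_id'.symm
    _ = ν.map (fun _ => c) := Measure.map_congr hid
    _ = Measure.dirac c := by simp [Measure.map_const]

section Symmetrization

variable {α : Type*} [MeasurableSpace α] {ν : Measure α} [IsProbabilityMeasure ν] {f g : α → ℝ}

theorem integrable_prod_sub_mul_sub (hf : Integrable f ν) (hg : Integrable g ν)
    (hfg : Integrable (fun x => f x * g x) ν) :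
    Integrable (fun p : α × α => (f p.1 - f p.2) * (g p.1 - g p.2)) (ν.prod ν) := by
  refine ((((hfg.comp_fst ν).sub (hf.mul_prod hg)).sub (hg.mul_prod hf)).add
    (hfg.comp_snd ν)).congr (ae_of_all _ fun p => ?_)
  simp only [Pi.add_apply, Pi.sub_apply]
  ring

theorem integral_prod_sub_mul_sub (hf : Integrable f ν) (hg : Integrable g ν)
    (hfg : Integrable (fun x => f x * g x) ν) :
    ∫ p, (f p.1 - f p.2) * (g p.1 - g p.2) ∂ν.prod ν
      = 2 * ((∫ x, f x * g x ∂ν) - (∫ x, f x ∂ν) * ∫ x, g x ∂ν) := by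
  calc ∫ p, (f p.1 - f p.2) * (g p.1 - g p.2) ∂ν.prod ν
      = ∫ p : α × α, (f p.1 * g p.1 - f p.1 * g p.2 - g p.1 * f p.2 + f p.2 * g p.2) ∂ν.prod ν :=
        integral_congr_ae (ae_of_all _ fun p => by ring)
    _ = 2 * ((∫ x, f x * g x ∂ν) - (∫ x, f x ∂ν) * ∫ x, g x ∂ν) := by
      rw [integral_add (f := fun p : α × α => f p.1 * g p.1 - f p.1 * g p.2 - g p.1 * f p.2)
          (((hfg.comp_fst ν).sub (hf.mul_prod hg)).sub (hg.mul_prod hf)) (hfg.comp_snd ν),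
        integral_sub (f := fun p : α × α => f p.1 * g p.1 - f p.1 * g p.2)
          ((hfg.comp_fst ν).sub (hf.mul_prod hg)) (hg.mul_prod hf),
        integral_sub (hfg.comp_fst ν) (hf.mul_prod hg), integral_fun_fst (fun x => f x * g x),
        integral_fun_snd (fun x => f x * g x), integral_prod_mul, integral_prod_mul]
      simp only [probReal_univ, one_smul]
      ring

theorem integral_mul_integral_lt_integral_mul [LinearOrder α] {s : Set α}
    (hν : ∀ c : α, ν ≠ Measure.dirac c) (hs : ∀ᵐ x ∂ν, x ∈ s)
    (hf_mono : StrictMonoOn f s) (hg_mono : StrictMonoOn g s)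
    (hf : Integrable f ν) (hg : Integrable g ν) (hfg : Integrable (fun x => f x * g x) ν) :
    (∫ x, f x ∂ν) * (∫ x, g x ∂ν) < ∫ x, f x * g x ∂ν := by
  set h : α × α → ℝ := fun p => (f p.1 - f p.2) * (g p.1 - g p.2)
  have hs₂ : ∀ᵐ p ∂ν.prod ν, p.1 ∈ s ∧ p.2 ∈ s :=
    (Measure.quasiMeasurePreserving_fst.ae hs).and (Measure.quasiMeasurePreserving_snd.ae hs)
  have h_pos : ∀ p : α × α, p.1 ∈ s → p.2 ∈ s → p.1 ≠ p.2 → 0 < h p := by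
    rintro ⟨x, y⟩ hx hy hxy
    rcases hxy.lt_or_gt with hlt | hlt
    · exact mul_pos_of_neg_of_neg (sub_neg.2 (hf_mono hx hy hlt)) (sub_neg.2 (hg_mono hx hy hlt))
    · exact mul_pos (sub_pos.2 (hf_mono hy hx hlt)) (sub_pos.2 (hg_mono hy hx hlt))
  have h_nonneg : 0 ≤ᵐ[ν.prod ν] h := hs₂.mono fun p ⟨hx, hy⟩ => by
    rcases eq_or_ne p.1 p.2 with hxy | hxy
    · simp [h, hxy]
    · exact (h_pos p hx hy hxy).le
  have h_ne_zero : ¬ h =ᵐ[ν.prod ν] 0 := fun h_zero => by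
    obtain ⟨c, rfl⟩ := ν.exists_eq_dirac_of_ae_prod_fst_eq_snd <|
      (hs₂.and h_zero).mono fun p ⟨⟨hx, hy⟩, hp⟩ => by_contra fun hxy => (h_pos p hx hy hxy).ne' hp
    exact hν c rfl
  have h_integral_pos : 0 < ∫ p, h p ∂ν.prod ν :=
    (integral_nonneg_of_ae h_nonneg).lt_of_ne fun h0 => h_ne_zero <|
      (integral_eq_zero_iff_of_nonneg_ae h_nonneg (integrable_prod_sub_mul_sub hf hg hfg)).1 h0.symm
  rw [integral_prod_sub_mul_sub hf hg hfg] at h_integral_pos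
  linarith

end Symmetrization

theorem strictMonoOn_one_div_sub (z : ℝ) : StrictMonoOn (fun x => 1 / (z - x)) (Iio z) :=
  fun _ hx _ hy hxy => one_div_lt_one_div_of_lt (sub_pos.2 hy) (by linarith)

section CauchyKernel

variable {b z : ℝ}

theorem abs_one_div_sub_le {x : ℝ} (hx : x ≤ b) (hz : b < z) : |1 / (z - x)| ≤ 1 / (z - b) := by
  rw [abs_of_pos (one_div_pos.2 (by linarith))]
  exact one_div_le_one_div_of_le (sub_pos.2 hz) (by linarith)

theorem integrable_one_div_sub {ν : Measure ℝ} [IsFiniteMeasure ν] (hν : ∀ᵐ x ∂ν, x ≤ b)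
    (hz : b < z) : Integrable (fun x => 1 / (z - x)) ν :=
  (integrable_const (1 / (z - b))).mono' (by fun_prop : Measurable _).aestronglyMeasurable
    (hν.mono fun _ hx => abs_one_div_sub_le hx hz)

theorem one_div_sub_sub_one_div_sub {x z₁ z₂ : ℝ} (h₁ : z₁ - x ≠ 0) (h₂ : z₂ - x ≠ 0) :
    1 / (z₁ - x) - 1 / (z₂ - x) = (z₂ - z₁) * (1 / (z₁ - x) * (1 / (z₂ - x))) := by
  field_simp
  ring

end CauchyKernel

/-- For non-degenerate ν supported in (-∞,b] and b < z₁ < z₂,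
G(z₁) - G(z₂) > (z₂ - z₁) G(z₁) G(z₂), where G is the Cauchy transform. -/
theorem stmt5 (ν : Measure ℝ) [IsProbabilityMeasure ν]
    (hnd : ∀ c : ℝ, ν ≠ Measure.dirac c) (b : ℝ)
    (hsupp : ∀ᵐ x ∂ν, x ≤ b)
    (z₁ z₂ : ℝ) (h1 : b < z₁) (h12 : z₁ < z₂) :
    (z₂ - z₁) * (∫ x, 1 / (z₁ - x) ∂ν) * (∫ x, 1 / (z₂ - x) ∂ν)
      < (∫ x, 1 / (z₁ - x) ∂ν) - ∫ x, 1 / (z₂ - x) ∂ν := by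
  have hf := integrable_one_div_sub hsupp h1
  have hg := integrable_one_div_sub hsupp (h1.trans h12)
  have hfg : Integrable (fun x => 1 / (z₁ - x) * (1 / (z₂ - x))) ν :=
    hg.bdd_mul (by fun_prop : Measurable _).aestronglyMeasurable
      (hsupp.mono fun _ hx => abs_one_div_sub_le hx h1)
  have h_lt := integral_mul_integral_lt_integral_mul hnd (hsupp.mono fun _ hx => hx.trans_lt h1)
    (strictMonoOn_one_div_sub z₁) ((strictMonoOn_one_div_sub z₂).mono (Iio_subset_Iio h12.le))
    hf hg hfg
  have h_resolvent : (∫ x, 1 / (z₁ - x) ∂ν) - ∫ x, 1 / (z₂ - x) ∂ν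
      = (z₂ - z₁) * ∫ x, 1 / (z₁ - x) * (1 / (z₂ - x)) ∂ν := by
    rw [← integral_sub hf hg, ← integral_const_mul]
    refine integral_congr_ae (hsupp.mono fun x hx => ?_)
    exact one_div_sub_sub_one_div_sub (by linarith) (by linarith)
  rw [h_resolvent, mul_assoc]
  exact mul_lt_mul_of_pos_left h_lt (sub_pos.2 h12)
end

section
/- Let ν be a probability measure with support bounded above by B = max{0, sup supp(ν)}, and with finite first moment m₀ = ∫ x dν(x). For m in the domain of means, let Q_m(dx) = V(m)·ν(dx)/(V(m) + m(m-x)) where V denotes the pseudo-variance, and suppose Q_m is a probability measure with mean m. Then the variance ∫(x-m)² Q_m(dx) equals ((m - m₀)/m)·V(m) whenever m ≠ 0. -/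
open MeasureTheory Real Set Filter

/- Multiplying x(x - m) by the density V/(V + m(m - x)) gives (V/m)·x·(density - 1), so the
second moment about m under Q_m is (V/m)(∫ x dQ_m - ∫ x dν) = (V/m)(m - m₀); under a
probability measure with mean m this second moment is the variance. -/

section WithDensityOfReal

variable {α E : Type*} [MeasurableSpace α] [NormedAddCommGroup E] [NormedSpace ℝ E]
  {ν : Measure α} {f : α → ℝ}

lemma integral_withDensity_ofReal (hf : Measurable f) (hf0 : 0 ≤ᵐ[ν] f) (g : α → E) :
    ∫ x, g x ∂ν.withDensity (fun x => ENNReal.ofReal (f x)) = ∫ x, f x • g x ∂ν := by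
  rw [integral_withDensity_eq_integral_toReal_smul hf.ennreal_ofReal
    (ae_of_all _ fun _ => ENNReal.ofReal_lt_top)]
  refine integral_congr_ae ?_
  filter_upwards [hf0] with x hx
  rw [ENNReal.toReal_ofReal hx]

lemma integrable_withDensity_ofReal_iff (hf : Measurable f) (hf0 : 0 ≤ᵐ[ν] f) {g : α → E} :
    Integrable g (ν.withDensity fun x => ENNReal.ofReal (f x)) ↔
      Integrable (fun x => f x • g x) ν := by
  rw [integrable_withDensity_iff_integrable_smul' hf.ennreal_ofReal
    (ae_of_all _ fun _ => ENNReal.ofReal_lt_top)]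
  refine integrable_congr ?_
  filter_upwards [hf0] with x hx
  rw [ENNReal.toReal_ofReal hx]

lemma nonneg_of_withDensity_ofReal_div_ne_zero {V : ℝ} {D : α → ℝ} (hD : ∀ᵐ x ∂ν, 0 < D x)
    (hne : ν.withDensity (fun x => ENNReal.ofReal (V / D x)) ≠ 0) : 0 ≤ V := by
  by_contra! hV
  refine hne ?_
  rw [← withDensity_zero]
  refine withDensity_congr_ae ?_
  filter_upwards [hD] with x hx
  exact ENNReal.ofReal_of_nonpos (div_nonpos_of_nonpos_of_nonneg hV.le hx.le)

end WithDensityOfReal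

lemma integral_sub_sq_eq_integral_mul_sub {Q : Measure ℝ} [IsProbabilityMeasure Q] {m : ℝ}
    (hx : Integrable (fun x => x) Q) (hmean : ∫ x, x ∂Q = m)
    (hint : Integrable (fun x => x * (x - m)) Q) :
    ∫ x, (x - m) ^ 2 ∂Q = ∫ x, x * (x - m) ∂Q := by
  have hcentered : ∫ x, m * (x - m) ∂Q = 0 := by
    rw [integral_const_mul, integral_sub hx (integrable_const m), hmean, integral_const,
      probReal_univ, one_smul, sub_self, mul_zero]
  calc ∫ x, (x - m) ^ 2 ∂Q = ∫ x, (x * (x - m) - m * (x - m)) ∂Q := by congr with x; ring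
    _ = ∫ x, x * (x - m) ∂Q := by
      rw [integral_sub hint (g := fun x => m * (x - m))
        ((hx.sub (integrable_const m)).const_mul m), hcentered, sub_zero]

lemma div_mul_mul_sub_eq {V m x : ℝ} (hm : m ≠ 0) (hD : V + m * (m - x) ≠ 0) :
    V / (V + m * (m - x)) * (x * (x - m)) = V / m * (V / (V + m * (m - x)) * x - x) := by
  field_simp
  ring

lemma integral_mul_sub_withDensity_eq {ν : Measure ℝ} {m V : ℝ} (hm : m ≠ 0) (hV : 0 ≤ V)
    (hpos : ∀ᵐ x ∂ν, 0 < V + m * (m - x)) (hint0 : Integrable (fun x => x) ν)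
    (hintQ : Integrable (fun x => x)
      (ν.withDensity fun x => ENNReal.ofReal (V / (V + m * (m - x))))) :
    ∫ x, x * (x - m) ∂ν.withDensity (fun x => ENNReal.ofReal (V / (V + m * (m - x)))) =
      V / m * (∫ x, x ∂ν.withDensity (fun x => ENNReal.ofReal (V / (V + m * (m - x)))) -
        ∫ x, x ∂ν) := by
  have hmeas : Measurable fun x => V / (V + m * (m - x)) := by fun_prop
  have hf0 : 0 ≤ᵐ[ν] fun x => V / (V + m * (m - x)) := by
    filter_upwards [hpos] with x hx
    exact div_nonneg hV hx.le
  rw [integrable_withDensity_ofReal_iff hmeas hf0] at hintQ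
  simp only [integral_withDensity_ofReal hmeas hf0, smul_eq_mul] at hintQ ⊢
  rw [← integral_sub hintQ hint0, ← integral_const_mul]
  refine integral_congr_ae ?_
  filter_upwards [hpos] with x hx
  exact div_mul_mul_sub_eq hm hx.ne'

theorem stmt8_general (ν : Measure ℝ) [IsProbabilityMeasure ν]
    (m₀ m V : ℝ) (hint0 : Integrable (fun x => x) ν)
    (hm₀ : m₀ = ∫ x, x ∂ν) (hm : m ≠ 0)
    (hpos : ∀ᵐ x ∂ν, 0 < V + m * (m - x))
    (Q : Measure ℝ)
    (hQ : Q = ν.withDensity (fun x => ENNReal.ofReal (V / (V + m * (m - x)))))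
    (hQprob : IsProbabilityMeasure Q)
    (hmean : ∫ x, x ∂Q = m)
    (hint : Integrable (fun x => x * (x - m)) Q) :
    ∫ x, (x - m) ^ 2 ∂Q = ((m - m₀) / m) * V := by
  have hV : 0 ≤ V := nonneg_of_withDensity_ofReal_div_ne_zero hpos (hQ ▸ hQprob.ne_zero)
  -- a nonintegrable x would have Bochner integral 0 ≠ m
  have hintx : Integrable (fun x => x) Q := by
    by_contra h
    exact hm (hmean ▸ integral_undef h)
  rw [integral_sub_sq_eq_integral_mul_sub hintx hmean hint, hQ,
    integral_mul_sub_withDensity_eq hm hV hpos hint0 (hQ ▸ hintx), ← hQ, hmean, ← hm₀]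
  ring

/-- If ν has finite first moment m₀ and Q_m is the member of the
CSK family with density V(m)/(V(m)+m(m-x)) with respect to ν, having mean m,
then the variance of Q_m equals ((m-m₀)/m)·V(m) for m ≠ 0. -/
theorem stmt8 (ν : Measure ℝ) [IsProbabilityMeasure ν] (B : ℝ)
    (hB : 0 ≤ B) (hsupp : ∀ᵐ x ∂ν, x ≤ B)
    (m₀ m V : ℝ) (hint0 : Integrable (fun x => x) ν)
    (hm₀ : m₀ = ∫ x, x ∂ν) (hm : m ≠ 0)
    (hpos : ∀ᵐ x ∂ν, 0 < V + m * (m - x))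
    (Q : Measure ℝ)
    (hQ : Q = ν.withDensity (fun x => ENNReal.ofReal (V / (V + m * (m - x)))))
    (hQprob : IsProbabilityMeasure Q)
    (hmean : ∫ x, x ∂Q = m)
    (hint : Integrable (fun x => x * (x - m)) Q) :
    ∫ x, (x - m) ^ 2 ∂Q = ((m - m₀) / m) * V :=
  stmt8_general ν m₀ m V hint0 hm₀ hm hpos Q hQ hQprob hmean hint
end

section
/- For p > 0, the function f(x) = p√(-p² - 4x)/(2πx²) on (-∞, -p²/4) (and 0 elsewhere) is a probability density, and its Cauchy transform is G(z) = (p² + 2z - p√(4z + p²))/(2z²) for z > -p²/4. -/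
/-!
Substitute `x = -(p² + s²)/4`, i.e. `s = √(-p² - 4x)`, which maps `(-∞, -p²/4)` onto
`(0, ∞)` with `dx = -(s/2) ds`. The density becomes `8ps / (π (p² + s²)²)` and
`z - x = (b² + s²)/4` with `b = √(4z + p²)`, so both integrals are integrals of rational
functions of `s` over `(0, ∞)`. These have explicit primitives built from `arctan (s/p)`,
`arctan (s/b)` and `s/(p² + s²)`, whose limits at infinity give `1` and
`(p² + 2z - pb) / (2z²)`.
-/

open MeasureTheory Real Set Filter Topology

noncomputable def freeHalfStableDensity (p x : ℝ) : ℝ :=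
  if x < -p ^ 2 / 4 then p * √(-p ^ 2 - 4 * x) / (2 * π * x ^ 2) else 0

theorem hasDerivAt_arctan_div {c : ℝ} (hc : c ≠ 0) (s : ℝ) :
    HasDerivAt (fun s ↦ arctan (s / c)) (c / (c ^ 2 + s ^ 2)) s := by
  refine ((hasDerivAt_id' s).div_const c).arctan.congr_deriv ?_
  field_simp

theorem hasDerivAt_div_sq_add_sq {c : ℝ} (hc : c ≠ 0) (s : ℝ) :
    HasDerivAt (fun s ↦ s / (c ^ 2 + s ^ 2)) ((c ^ 2 - s ^ 2) / (c ^ 2 + s ^ 2) ^ 2) s := by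
  have hpos : 0 < c ^ 2 + s ^ 2 := by positivity
  refine ((hasDerivAt_id' s).div ((hasDerivAt_pow 2 s).const_add (c ^ 2)) hpos.ne').congr_deriv ?_
  field_simp
  ring

theorem tendsto_arctan_div_atTop {c : ℝ} (hc : 0 < c) :
    Tendsto (fun s ↦ arctan (s / c)) atTop (𝓝 (π / 2)) :=
  tendsto_nhds_of_tendsto_nhdsWithin tendsto_arctan_atTop |>.comp
    (tendsto_id.atTop_div_const hc)

theorem tendsto_div_sq_add_sq_atTop (c : ℝ) :
    Tendsto (fun s ↦ s / (c ^ 2 + s ^ 2)) atTop (𝓝 0) := by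
  refine tendsto_of_tendsto_of_tendsto_of_le_of_le' tendsto_const_nhds tendsto_inv_atTop_zero
    ?_ ?_ <;> filter_upwards [eventually_gt_atTop 0] with s hs
  · positivity
  · rw [div_le_iff₀ (by positivity), inv_mul_eq_div, le_div_iff₀ hs]
    nlinarith [sq_nonneg c]

theorem integral_Iio_comp_sqrt_eq_of_hasDerivAt {c L : ℝ} {Φ ψ : ℝ → ℝ}
    (hΦ : ∀ s, 0 ≤ s → HasDerivAt Φ (s * ψ s / 2) s) (hψ : ∀ s, 0 < s → 0 ≤ ψ s)
    (hL : Tendsto Φ atTop (𝓝 L)) :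
    ∫ x in Iio (-c / 4), ψ √(-c - 4 * x) = L - Φ 0 := by
  have hreflect :
      ∫ x in Iio (-c / 4), ψ √(-c - 4 * x) = ∫ t in Ioi (c / 4), ψ √(4 * t - c) := by
    rw [← integral_Iic_eq_integral_Iio, neg_div, ← integral_comp_neg_Ioi]
    simp only [mul_neg, sub_neg_eq_add, neg_add_eq_sub]
  have hcont : ContinuousWithinAt (fun t ↦ Φ √(4 * t - c)) (Ici (c / 4)) (c / 4) :=
    (hΦ _ (sqrt_nonneg _)).continuousAt.comp_continuousWithinAt (f := fun t ↦ √(4 * t - c))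
      (by fun_prop)
  have hderiv :
      ∀ t ∈ Ioi (c / 4), HasDerivAt (fun t ↦ Φ √(4 * t - c)) (ψ √(4 * t - c)) t := by
    intro t ht
    have hpos : 0 < 4 * t - c := by linarith [ht.out]
    have hs : √(4 * t - c) ≠ 0 := (sqrt_pos.2 hpos).ne'
    have hsqrt := ((hasDerivAt_id' t).const_mul 4 |>.sub_const c).sqrt hpos.ne'
    refine ((hΦ (√(4 * t - c)) (sqrt_nonneg _)).comp t hsqrt).congr_deriv ?_
    field_simp
    ring
  have htop : Tendsto (fun t ↦ √(4 * t - c)) atTop atTop :=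
    tendsto_sqrt_atTop.comp
      (tendsto_atTop_add_const_right _ _ (tendsto_id.const_mul_atTop four_pos))
  have := integral_Ioi_of_hasDerivAt_of_nonneg hcont hderiv
    (fun t ht ↦ hψ _ (sqrt_pos.2 (by linarith [ht.out]))) (hL.comp htop)
  simpa [hreflect, mul_div_cancel₀] using this

theorem freeHalfStableDensity_of_le {p x : ℝ} (hx : -p ^ 2 / 4 ≤ x) :
    freeHalfStableDensity p x = 0 :=
  if_neg hx.not_gt

theorem freeHalfStableDensity_of_lt {p x : ℝ} (hx : x < -p ^ 2 / 4) :
    freeHalfStableDensity p x =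
      8 * p * √(-p ^ 2 - 4 * x) / (π * (p ^ 2 + √(-p ^ 2 - 4 * x) ^ 2) ^ 2) := by
  rw [freeHalfStableDensity, if_pos hx, sq_sqrt (by linarith),
    show p ^ 2 + (-p ^ 2 - 4 * x) = -4 * x by ring]
  have hx0 : x ≠ 0 := by nlinarith
  field_simp
  ring

theorem integral_freeHalfStableDensity {p : ℝ} (hp : 0 < p) :
    ∫ x, freeHalfStableDensity p x = 1 := by
  set Φ : ℝ → ℝ := fun s ↦ 2 / π * (arctan (s / p) - p * (s / (p ^ 2 + s ^ 2)))
  have hΦ (s : ℝ) : HasDerivAt Φ (s * (8 * p * s / (π * (p ^ 2 + s ^ 2) ^ 2)) / 2) s := by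
    refine (((hasDerivAt_arctan_div hp.ne' s).sub
      ((hasDerivAt_div_sq_add_sq hp.ne' s).const_mul p)).const_mul (2 / π)).congr_deriv ?_
    have : 0 < p ^ 2 + s ^ 2 := by positivity
    field_simp
    ring
  have hL : Tendsto Φ atTop (𝓝 1) := by
    convert ((tendsto_arctan_div_atTop hp).sub
      ((tendsto_div_sq_add_sq_atTop p).const_mul p)).const_mul (2 / π) using 2
    field_simp
    ring
  rw [← setIntegral_eq_integral_of_forall_compl_eq_zero (s := Iio (-p ^ 2 / 4))
      fun x hx ↦ freeHalfStableDensity_of_le (not_lt.1 hx),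
    setIntegral_congr_fun measurableSet_Iio fun x hx ↦ freeHalfStableDensity_of_lt hx,
    integral_Iio_comp_sqrt_eq_of_hasDerivAt (fun s _ ↦ hΦ s) (fun s hs ↦ by positivity) hL]
  simp [Φ]

theorem integral_freeHalfStableDensity_div_sub {p z : ℝ} (hp : 0 < p) (hz : -p ^ 2 / 4 < z)
    (hz0 : z ≠ 0) :
    ∫ x, freeHalfStableDensity p x / (z - x) =
      (p ^ 2 + 2 * z - p * √(4 * z + p ^ 2)) / (2 * z ^ 2) := by
  set b := √(4 * z + p ^ 2)
  have hb : b ^ 2 = 4 * z + p ^ 2 := sq_sqrt (by linarith)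
  have hb0 : 0 < b := sqrt_pos.2 (by linarith)
  set ψ : ℝ → ℝ := fun s ↦ 32 * p * s / (π * (p ^ 2 + s ^ 2) ^ 2 * (b ^ 2 + s ^ 2))
  have hintegrand {x : ℝ} (hx : x < -p ^ 2 / 4) :
      freeHalfStableDensity p x / (z - x) = ψ √(-p ^ 2 - 4 * x) := by
    have hzx : z - x = (b ^ 2 + √(-p ^ 2 - 4 * x) ^ 2) / 4 := by
      rw [hb, sq_sqrt (by linarith)]
      ring
    rw [freeHalfStableDensity_of_lt hx, hzx]
    have : 0 < p ^ 2 + √(-p ^ 2 - 4 * x) ^ 2 := by positivity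
    have : 0 < b ^ 2 + √(-p ^ 2 - 4 * x) ^ 2 := by positivity
    simp only [ψ]
    field_simp
    ring
  -- partial fractions of `s² / ((p² + s²)² (b² + s²))`, where `b² - p² = 4z`
  set Φ : ℝ → ℝ := fun s ↦ ((b ^ 2 / z ^ 2 - 2 / z) * arctan (s / p)
    - p * b / z ^ 2 * arctan (s / b) - 2 * p / z * (s / (p ^ 2 + s ^ 2))) / π
  have hΦ (s : ℝ) : HasDerivAt Φ (s * ψ s / 2) s := by
    refine ((((hasDerivAt_arctan_div hp.ne' s).const_mul _).sub
      ((hasDerivAt_arctan_div hb0.ne' s).const_mul _)).sub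
      ((hasDerivAt_div_sq_add_sq hp.ne' s).const_mul _) |>.div_const π).congr_deriv ?_
    have : 0 < p ^ 2 + s ^ 2 := by positivity
    have : 0 < b ^ 2 + s ^ 2 := by positivity
    simp only [ψ]
    field_simp
    linear_combination ((2 * p ^ 2 + 2 * s ^ 2) * b ^ 2 + 8 * s ^ 2 * z) * hb
  have hL : Tendsto Φ atTop (𝓝 ((p ^ 2 + 2 * z - p * b) / (2 * z ^ 2))) := by
    convert ((((tendsto_arctan_div_atTop hp).const_mul _).sub
      ((tendsto_arctan_div_atTop hb0).const_mul _)).sub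
      ((tendsto_div_sq_add_sq_atTop p).const_mul _)).div_const π using 2
    field_simp
    linear_combination -π * hb
  rw [← setIntegral_eq_integral_of_forall_compl_eq_zero (s := Iio (-p ^ 2 / 4))
      (f := fun x ↦ freeHalfStableDensity p x / (z - x))
      fun x hx ↦ by rw [freeHalfStableDensity_of_le (not_lt.1 hx), zero_div],
    setIntegral_congr_fun measurableSet_Iio fun x hx ↦ hintegrand hx,
    integral_Iio_comp_sqrt_eq_of_hasDerivAt (fun s _ ↦ hΦ s) (fun s hs ↦ by positivity) hL]
  simp [Φ]

/-- For p > 0, f(x) = p√(-p²-4x)/(2πx²) on (-∞,-p²/4) is a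
probability density, whose Cauchy transform is
G(z) = (p²+2z-p√(4z+p²))/(2z²) for real z > -p²/4 (z ≠ 0, where the closed
formula's denominator vanishes). -/
theorem stmt13 (p : ℝ) (hp : 0 < p) :
    (∫ x : ℝ, (if x < -p ^ 2 / 4 then p * Real.sqrt (-p ^ 2 - 4 * x) / (2 * π * x ^ 2) else 0)) = 1 ∧
    ∀ z : ℝ, -p ^ 2 / 4 < z → z ≠ 0 →
      (∫ x : ℝ, (if x < -p ^ 2 / 4 then p * Real.sqrt (-p ^ 2 - 4 * x) / (2 * π * x ^ 2) else 0) / (z - x))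
        = (p ^ 2 + 2 * z - p * Real.sqrt (4 * z + p ^ 2)) / (2 * z ^ 2) :=
  ⟨integral_freeHalfStableDensity hp,
    fun _ hz hz0 ↦ integral_freeHalfStableDensity_div_sub hp hz hz0⟩
end

section
/- For p > 0, the inverse semicircle law ν with density p√(-p²-4x)/(2πx²) on (-∞, -p²/4) has R-transform 𝓡_ν(z) = -p/√z for z > 0; i.e., K(z) := 𝓡_ν(z) + 1/z = -p/√z + 1/z satisfies G(K(z)) = z for 0 < z < G(-p²/4), where G(z) = (p² + 2z - p√(4z+p²))/(2z²). -/
/-!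
Write `s = √z`, so that `K(z) = 1/z - p/√z = (1 - p s)/s²`. Then
`4 K(z) + p² = ((2 - p s)/s)²`, and the square root in `G` equals `(2 - p s)/s` precisely when
`p s ≤ 2`, which is what `z < G(-p²/4) = 4/p²` guarantees. With this branch the numerator of
`G(K(z))` is `2(1 - p s)²/s²` and its denominator `2(1 - p s)²/s⁴`, so `G(K(z)) = s² = z`;
the case `p s = 1` is the removable singularity `K(z) = 0`.
-/

open Real

noncomputable def invSemicircleCauchy (p t : ℝ) : ℝ :=
  (p ^ 2 + 2 * t - p * √(4 * t + p ^ 2)) / (2 * t ^ 2)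

section InvSemicircleCauchy

variable {p s : ℝ}

lemma invSemicircleCauchy_neg_sq_div_four (p : ℝ) :
    invSemicircleCauchy p (-p ^ 2 / 4) = 4 / p ^ 2 := by
  rcases eq_or_ne p 0 with rfl | hp
  · simp [invSemicircleCauchy]
  · have hzero : 4 * (-p ^ 2 / 4) + p ^ 2 = 0 := by ring
    rw [invSemicircleCauchy, hzero, sqrt_zero]
    field_simp
    ring

lemma sqrt_four_mul_one_sub_mul_div_sq_add_sq (hs : 0 < s) (hps : p * s ≤ 2) :
    √(4 * ((1 - p * s) / s ^ 2) + p ^ 2) = (2 - p * s) / s := by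
  have hsquare : 4 * ((1 - p * s) / s ^ 2) + p ^ 2 = ((2 - p * s) / s) ^ 2 := by
    field_simp
    ring
  rw [hsquare, sqrt_sq (div_nonneg (by linarith) hs.le)]

lemma invSemicircleCauchy_one_sub_mul_div_sq (hs : 0 < s) (hps : p * s ≤ 2)
    (hps1 : p * s ≠ 1) : invSemicircleCauchy p ((1 - p * s) / s ^ 2) = s ^ 2 := by
  have h1 : 1 - p * s ≠ 0 := sub_ne_zero.mpr hps1.symm
  rw [invSemicircleCauchy, sqrt_four_mul_one_sub_mul_div_sq_add_sq hs hps]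
  field_simp
  ring

lemma mul_sqrt_lt_two_of_lt_four_div_sq {z : ℝ} (hz : 0 ≤ z) (h : z < 4 / p ^ 2) :
    p * √z < 2 := by
  rcases eq_or_ne p 0 with rfl | hp
  · norm_num
  have hsq : (p * √z) ^ 2 < 2 ^ 2 := by
    rw [mul_pow, sq_sqrt hz]
    have := (lt_div_iff₀ (by positivity)).mp h
    linarith
  exact lt_of_abs_lt (abs_lt_of_sq_lt_sq hsq zero_le_two)

variable {G : ℝ → ℝ}

lemma apply_neg_sq_div_four_of_eq_invSemicircleCauchy
    (hG : ∀ t, t ≠ 0 → G t = invSemicircleCauchy p t) (hG0 : G 0 = 1 / p ^ 2) :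
    G (-p ^ 2 / 4) = 4 / p ^ 2 := by
  rcases eq_or_ne p 0 with rfl | hp
  · simpa using hG0
  · rw [hG _ (div_ne_zero (neg_ne_zero.mpr (pow_ne_zero 2 hp)) four_ne_zero),
      invSemicircleCauchy_neg_sq_div_four]

lemma apply_one_sub_mul_div_sq_of_eq_invSemicircleCauchy
    (hG : ∀ t, t ≠ 0 → G t = invSemicircleCauchy p t) (hG0 : G 0 = 1 / p ^ 2)
    (hs : 0 < s) (hps : p * s ≤ 2) : G ((1 - p * s) / s ^ 2) = s ^ 2 := by
  by_cases hps1 : p * s = 1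
  · have hp : p = 1 / s := by field_simp; exact hps1
    rw [hps1, sub_self, zero_div, hG0, hp]
    field_simp
  · have ht : (1 - p * s) / s ^ 2 ≠ 0 :=
      div_ne_zero (sub_ne_zero.mpr (Ne.symm hps1)) (by positivity)
    rw [hG _ ht, invSemicircleCauchy_one_sub_mul_div_sq hs hps hps1]

end InvSemicircleCauchy

theorem stmt14_general (p : ℝ) (G : ℝ → ℝ)
    (hG : ∀ t : ℝ, t ≠ 0 →
      G t = (p ^ 2 + 2 * t - p * Real.sqrt (4 * t + p ^ 2)) / (2 * t ^ 2))
    (hG0 : G 0 = 1 / p ^ 2)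
    (z : ℝ) (hz : 0 < z) (hz2 : z < G (-p ^ 2 / 4)) :
    G (1 / z - p / Real.sqrt z) = z := by
  rw [apply_neg_sq_div_four_of_eq_invSemicircleCauchy hG hG0] at hz2
  have hps : p * √z < 2 := mul_sqrt_lt_two_of_lt_four_div_sq hz.le hz2
  have hsqrt : 0 < √z := sqrt_pos.mpr hz
  have hK : 1 / z - p / √z = (1 - p * √z) / √z ^ 2 := by
    nth_rewrite 1 [← sq_sqrt hz.le]
    field_simp
  rw [hK, apply_one_sub_mul_div_sq_of_eq_invSemicircleCauchy hG hG0 hsqrt hps.le,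
    sq_sqrt hz.le]

/-- For the inverse semicircle law with Cauchy transform
G(t) = (p²+2t-p√(4t+p²))/(2t²) (with G(0) = 1/p², the removable-singularity
value), the function K(z) = 𝓡(z) + 1/z = 1/z - p/√z satisfies G(K(z)) = z
for 0 < z < G(-p²/4); i.e. the R-transform is 𝓡(z) = -p/√z. -/
theorem stmt14 (p : ℝ) (hp : 0 < p) (G : ℝ → ℝ)
    (hG : ∀ t : ℝ, t ≠ 0 →
      G t = (p ^ 2 + 2 * t - p * Real.sqrt (4 * t + p ^ 2)) / (2 * t ^ 2))
    (hG0 : G 0 = 1 / p ^ 2)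
    (z : ℝ) (hz : 0 < z) (hz2 : z < G (-p ^ 2 / 4)) :
    G (1 / z - p / Real.sqrt z) = z :=
  stmt14_general p G hG hG0 z hz hz2
end

section
/- The measure ν(dx) = (1/(π(1-x)√(-x))) 1_{(-∞,0)}(x) dx (free Abel law) is a probability measure whose CSK family has pseudo-variance function 𝕍(m) = m²(m-1): for m < 0, the Cauchy transform G(z) = ∫ν(dx)/(z-x) satisfies G(z(m)) = m/𝕍(m), where z(m) = m + 𝕍(m)/m = m + m(m-1) = m². -/
open MeasureTheory Real Set Filter

lemma arctanSqrtDeriv (a : ℝ) (ha : 0 < a) {y : ℝ} (hy : 0 < y) :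
    HasDerivAt (fun t => Real.arctan (Real.sqrt t / a))
      (a / (2 * Real.sqrt y * (a ^ 2 + y))) y := by
  have hs : Real.sqrt y ≠ 0 := by positivity
  have h1 : HasDerivAt (fun t => Real.sqrt t / a) (1 / (2 * Real.sqrt y) / a) y :=
    (Real.hasDerivAt_sqrt hy.ne').div_const a
  have h2 := (Real.hasDerivAt_arctan (Real.sqrt y / a)).comp y h1
  convert h2 using 1 <;> try rfl
  have hsq : Real.sqrt y ^ 2 = y := Real.sq_sqrt hy.le
  rw [div_pow, hsq]
  field_simp

lemma tendsto_arctan_sqrt (a : ℝ) (ha : 0 < a) :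
    Tendsto (fun y => Real.arctan (Real.sqrt y / a)) atTop (nhds (π / 2)) := by
  have hsq : Tendsto Real.sqrt atTop atTop := by
    apply tendsto_atTop_atTop_of_monotone (fun x y h => Real.sqrt_le_sqrt h)
    intro b
    exact ⟨(max b 0) ^ 2, by rw [Real.sqrt_sq (le_max_right _ _)]; exact le_max_left _ _⟩
  have h1 : Tendsto (fun y : ℝ => Real.sqrt y / a) atTop atTop :=
    hsq.atTop_div_const ha
  exact (Real.tendsto_arctan_atTop.mono_right nhdsWithin_le_nhds).comp h1

lemma I1 : (∫ y in Ioi (0:ℝ), 1 / (π * (1 + y) * Real.sqrt y)) = 1 := by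
  have h := integral_Ioi_of_hasDerivAt_of_nonneg (a := (0:ℝ)) (l := 1)
      (g := fun y => 2 / π * Real.arctan (Real.sqrt y / 1))
      (g' := fun y => 1 / (π * (1 + y) * Real.sqrt y)) ?_ ?_ ?_ ?_
  · rw [h]; simp
  · exact ((Real.continuous_arctan.comp ((Real.continuous_sqrt).div_const 1)).const_smul
      (2/π)).continuousWithinAt
  · intro y hy
    have := (arctanSqrtDeriv 1 one_pos (hy : (0:ℝ) < y)).const_mul (2 / π)
    convert this using 1 <;> try rfl
    have hy' : (0:ℝ) < y := hy
    have hs : Real.sqrt y ≠ 0 := by positivity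
    have h1y : (1:ℝ) + y ≠ 0 := by positivity
    have hπ : π ≠ 0 := Real.pi_ne_zero
    field_simp
  · intro y hy
    have hy' : (0:ℝ) < y := hy
    have hs : (0:ℝ) < Real.sqrt y := Real.sqrt_pos.mpr hy'
    positivity
  · have := tendsto_arctan_sqrt 1 one_pos
    have h2 : (2 / π) * (π / 2) = 1 := by field_simp
    simpa [h2] using this.const_mul (2 / π)

lemma sqrt_tendsto : Tendsto Real.sqrt atTop atTop := by
  apply tendsto_atTop_atTop_of_monotone (fun x y h => Real.sqrt_le_sqrt h)
  intro b
  exact ⟨(max b 0) ^ 2, by rw [Real.sqrt_sq (le_max_right _ _)]; exact le_max_left _ _⟩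

lemma I2 (a : ℝ) (ha : 0 < a) :
    (∫ y in Ioi (0:ℝ), 1 / ((a ^ 2 + y) * (π * (1 + y) * Real.sqrt y)))
      = 1 / (a * (a + 1)) := by
  have hπ : π ≠ 0 := Real.pi_ne_zero
  rcases eq_or_ne a 1 with rfl | hne
  · -- a = 1
    have h := integral_Ioi_of_hasDerivAt_of_nonneg (a := (0:ℝ)) (l := 1/2)
        (g := fun y => 1 / π * (Real.arctan (Real.sqrt y / 1) + Real.sqrt y / (1 + y)))
        (g' := fun y => 1 / ((1 ^ 2 + y) * (π * (1 + y) * Real.sqrt y))) ?_ ?_ ?_ ?_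
    · rw [h]; norm_num
    · have hco : ContinuousOn (fun y => 1 / π *
          (Real.arctan (Real.sqrt y / 1) + Real.sqrt y / (1 + y))) (Ici (0:ℝ)) := by
        apply ContinuousOn.mul continuousOn_const
        apply ContinuousOn.add
          ((Real.continuous_arctan.comp (Real.continuous_sqrt.div_const 1)).continuousOn)
        exact ContinuousOn.div Real.continuous_sqrt.continuousOn (by fun_prop)
          (fun x hx => by have hx' : (0:ℝ) ≤ x := hx; positivity)
      exact hco 0 self_mem_Ici
    · intro y hy
      have hy' : (0:ℝ) < y := hy
      have hs0 : (0:ℝ) < Real.sqrt y := Real.sqrt_pos.mpr hy'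
      have h1y : (0:ℝ) < 1 + y := by linarith
      have hd1 := arctanSqrtDeriv 1 one_pos hy'
      have hd2 : HasDerivAt (fun t => Real.sqrt t / (1 + t))
          ((1 / (2 * Real.sqrt y) * (1 + y) - Real.sqrt y * 1) / (1 + y) ^ 2) y :=
        (Real.hasDerivAt_sqrt hy'.ne').div ((hasDerivAt_id y).const_add 1) h1y.ne'
      have := ((hd1.add hd2).const_mul (1 / π))
      convert this using 1 <;> try rfl
      have hsq : Real.sqrt y ^ 2 = y := Real.sq_sqrt hy'.le
      set s := Real.sqrt y with hs_def
      rw [show y = s ^ 2 from hsq.symm]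
      have hs' : s ≠ 0 := hs0.ne'
      have h1s : (1:ℝ) + s ^ 2 ≠ 0 := by positivity
      field_simp
      ring
    · intro y hy
      have hy' : (0:ℝ) < y := hy
      have hs : (0:ℝ) < Real.sqrt y := Real.sqrt_pos.mpr hy'
      have h1y : (0:ℝ) < 1 + y := by linarith
      positivity
    · have h1 := tendsto_arctan_sqrt 1 one_pos
      have h2 : Tendsto (fun y : ℝ => Real.sqrt y / (1 + y)) atTop (nhds 0) := by
        apply squeeze_zero' (g := fun y : ℝ => 1 / Real.sqrt y)
        · filter_upwards [eventually_ge_atTop (0:ℝ)] with y hy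
          positivity
        · filter_upwards [eventually_ge_atTop (1:ℝ)] with y hy
          have hy' : (0:ℝ) < y := by linarith
          have hs : (0:ℝ) < Real.sqrt y := Real.sqrt_pos.mpr hy'
          have h1y : (0:ℝ) < 1 + y := by linarith
          rw [div_le_div_iff₀ h1y hs]
          nlinarith [Real.sq_sqrt hy'.le]
        · exact tendsto_inv_atTop_zero.comp sqrt_tendsto |>.congr (fun y => (one_div _).symm)
      have h3 := (h1.add h2).const_mul (1 / π)
      have : 1 / π * (π / 2 + 0) = 1 / 2 := by field_simp; simp
      rwa [this] at h3
  · -- a ≠ 1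
    have ha2 : a ^ 2 - 1 ≠ 0 := by
      intro h
      have : (a - 1) * (a + 1) = 0 := by ring_nf; linarith [h]
      rcases mul_eq_zero.mp this with h' | h'
      · exact hne (by linarith)
      · linarith
    have hC : 1 / (π * (a ^ 2 - 1)) * (2 * (π / 2) - 2 / a * (π / 2)) = 1 / (a * (a + 1)) := by
      field_simp
      ring_nf
    have h := integral_Ioi_of_hasDerivAt_of_nonneg (a := (0:ℝ)) (l := 1 / (a * (a + 1)))
        (g := fun y => 1 / (π * (a ^ 2 - 1)) *
          (2 * Real.arctan (Real.sqrt y / 1) - 2 / a * Real.arctan (Real.sqrt y / a)))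
        (g' := fun y => 1 / ((a ^ 2 + y) * (π * (1 + y) * Real.sqrt y))) ?_ ?_ ?_ ?_
    · rw [h]; simp
    · apply Continuous.continuousWithinAt
      apply Continuous.mul continuous_const
      exact (continuous_const.mul
          (Real.continuous_arctan.comp (Real.continuous_sqrt.div_const 1))).sub
        (continuous_const.mul
          (Real.continuous_arctan.comp (Real.continuous_sqrt.div_const a)))
    · intro y hy
      have hy' : (0:ℝ) < y := hy
      have hs0 : (0:ℝ) < Real.sqrt y := Real.sqrt_pos.mpr hy'
      have h1y : (0:ℝ) < 1 + y := by linarith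
      have hay : (0:ℝ) < a ^ 2 + y := by positivity
      have hd1 := (arctanSqrtDeriv 1 one_pos hy').const_mul 2
      have hd2 := (arctanSqrtDeriv a ha hy').const_mul (2 / a)
      have := (hd1.sub hd2).const_mul (1 / (π * (a ^ 2 - 1)))
      convert this using 1 <;> try rfl
      have hs' : Real.sqrt y ≠ 0 := hs0.ne'
      field_simp
      ring
    · intro y hy
      have hy' : (0:ℝ) < y := hy
      have hs : (0:ℝ) < Real.sqrt y := Real.sqrt_pos.mpr hy'
      have h1y : (0:ℝ) < 1 + y := by linarith
      have hay : (0:ℝ) < a ^ 2 + y := by positivity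
      positivity
    · have h1 := (tendsto_arctan_sqrt 1 one_pos).const_mul 2
      have h2 := (tendsto_arctan_sqrt a ha).const_mul (2 / a)
      have h3 := (h1.sub h2).const_mul (1 / (π * (a ^ 2 - 1)))
      rwa [hC] at h3

lemma I1int : IntegrableOn (fun y => 1 / (π * (1 + y) * Real.sqrt y)) (Ioi (0:ℝ)) := by
  apply integrableOn_Ioi_deriv_of_nonneg (a := (0:ℝ)) (l := 1)
      (g := fun y => 2 / π * Real.arctan (Real.sqrt y / 1))
  · exact ((Real.continuous_arctan.comp ((Real.continuous_sqrt).div_const 1)).const_smul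
      (2/π)).continuousWithinAt
  · intro y hy
    have := (arctanSqrtDeriv 1 one_pos (hy : (0:ℝ) < y)).const_mul (2 / π)
    convert this using 1 <;> try rfl
    have hy' : (0:ℝ) < y := hy
    have hs : Real.sqrt y ≠ 0 := by positivity
    have h1y : (1:ℝ) + y ≠ 0 := by positivity
    have hπ : π ≠ 0 := Real.pi_ne_zero
    field_simp
  · intro y hy
    have hy' : (0:ℝ) < y := hy
    have hs : (0:ℝ) < Real.sqrt y := Real.sqrt_pos.mpr hy'
    positivity
  · have := tendsto_arctan_sqrt 1 one_pos
    have h2 : (2 / π) * (π / 2) = 1 := by field_simp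
    simpa [h2] using this.const_mul (2 / π)

/-- The free Abel law ν(dx) = 1/(π(1-x)√(-x)) dx on (-∞,0) is a
probability measure, and its CSK family has pseudo-variance 𝕍(m) = m²(m-1):
for m < 0, with z(m) = m + 𝕍(m)/m = m², G(m²) = m/𝕍(m) = 1/(m(m-1)). -/
theorem stmt19 (ν : Measure ℝ)
    (hν : ν = volume.withDensity (fun x =>
      ENNReal.ofReal (if x < 0 then 1 / (π * (1 - x) * Real.sqrt (-x)) else 0))) :
    IsProbabilityMeasure ν ∧
    ∀ m : ℝ, m < 0 →
      (∫ x, 1 / ((m ^ 2 : ℝ) - x) ∂ν) = 1 / (m * (m - 1)) := by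
  set ρ : ℝ → ℝ := fun x => if x < 0 then 1 / (π * (1 - x) * Real.sqrt (-x)) else 0 with hρ
  have hρmeas : Measurable ρ := by
    apply Measurable.ite measurableSet_Iio _ measurable_const
    exact measurable_const.div
      (((measurable_const.mul (measurable_const.sub measurable_id)).mul
        (Real.continuous_sqrt.measurable.comp measurable_neg)))
  have hρ0 : ∀ x, 0 ≤ ρ x := by
    intro x
    simp only [hρ]
    split_ifs with h
    · have h1 : (0:ℝ) < 1 - x := by linarith
      positivity
    · exact le_rfl
  have hcompneg : (ρ ∘ fun x => -x) =
      Set.indicator (Ioi 0) (fun y => 1 / (π * (1 + y) * Real.sqrt y)) := by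
    ext y
    simp only [Function.comp_apply, hρ, Set.indicator_apply, mem_Ioi, neg_lt_zero, neg_neg,
      sub_neg_eq_add]
  have hembed : MeasurableEmbedding (fun x : ℝ => -x) :=
    (Homeomorph.neg ℝ).isClosedEmbedding.measurableEmbedding
  have hρint : Integrable ρ volume := by
    rw [← Measure.map_neg_eq_self (volume : Measure ℝ), hembed.integrable_map_iff, hcompneg,
      integrable_indicator_iff measurableSet_Ioi]
    exact I1int
  have hρind : ρ = Set.indicator (Iio 0) (fun x => 1 / (π * (1 - x) * Real.sqrt (-x))) := by
    ext x
    simp only [hρ, Set.indicator_apply, mem_Iio]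
  have hρI : (∫ x, ρ x) = 1 := by
    rw [hρind, integral_indicator measurableSet_Iio,
      setIntegral_congr_set Iio_ae_eq_Iic, show (0:ℝ) = -0 by norm_num,
      ← integral_comp_neg_Ioi]
    simp only [neg_neg, sub_neg_eq_add]
    exact I1
  constructor
  · constructor
    rw [hν, withDensity_apply _ MeasurableSet.univ, Measure.restrict_univ]
    have : (∫⁻ x, ENNReal.ofReal (ρ x)) = ENNReal.ofReal (∫ x, ρ x) :=
      (ofReal_integral_eq_lintegral_ofReal hρint (Eventually.of_forall hρ0)).symm
    rw [this, hρI, ENNReal.ofReal_one]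
  · intro m hm
    have ha : (0:ℝ) < -m := by linarith
    rw [hν]
    rw [show (fun x => ENNReal.ofReal (ρ x)) = (fun x => (((fun x => (ρ x).toNNReal) x : NNReal) : ENNReal))
      from rfl]
    rw [integral_withDensity_eq_integral_smul (hρmeas.real_toNNReal) _]
    have hsmul : (fun x => (ρ x).toNNReal • (1 / ((m ^ 2 : ℝ) - x))) =
        Set.indicator (Iio 0)
          (fun x => 1 / (π * (1 - x) * Real.sqrt (-x)) * (1 / (m ^ 2 - x))) := by
      ext x
      rw [NNReal.smul_def, Real.coe_toNNReal _ (hρ0 x)]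
      simp only [hρ, Set.indicator_apply, mem_Iio]
      split_ifs <;> simp
    rw [hsmul, integral_indicator measurableSet_Iio,
      setIntegral_congr_set Iio_ae_eq_Iic, show (0:ℝ) = -0 by norm_num,
      ← integral_comp_neg_Ioi]
    have hcong : ∀ y : ℝ,
        1 / (π * (1 - -y) * Real.sqrt (-(-y))) * (1 / (m ^ 2 - -y)) =
        1 / (((-m) ^ 2 + y) * (π * (1 + y) * Real.sqrt y)) := by
      intro y
      rw [neg_neg, sub_neg_eq_add, sub_neg_eq_add, neg_sq, one_div_mul_one_div, mul_comm]
    simp_rw [hcong]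
    rw [I2 (-m) ha]
    rw [show (-m) * (-m + 1) = m * (m - 1) by ring]
end
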